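/- arXiv:2504.19259 — 3 statements merged into one kernel-verified Lean document; each statement's English description precedes it below -/
import Mathlib

section
/- For every θ ∈ ℝⁿ, the Hessian ∇²ψ(θ) of ψ satisfies 0 ≺ ∇²ψ(θ) ≺ I; that is, ∇²ψ(θ) is positive definite and I − ∇²ψ(θ) is positive definite. -/
open Filter

noncomputable section

abbrev E (n : ℕ) := EuclideanSpace ℝ (Fin n)

/-- The open probability simplex `S_n` inside `ℝ^{n+1}`. -/
def simplex (n : ℕ) : Set (Fin (n+1) → ℝ) :=
  {p | (∀ i, 0 < p i) ∧ ∑ i, p i = 1}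

/-- The mixture (`η`) coordinate domain `Δ_n`. -/
def Δset (n : ℕ) : Set (E n) := {η | (∀ i, 0 < η i) ∧ ∑ i, η i < 1}

/-- The distribution in `S_n` corresponding to `η` coordinates. -/
def mixDist {n : ℕ} (η : E n) : Fin (n+1) → ℝ :=
  Fin.snoc (fun i => η i) (1 - ∑ i, η i)

/-- The distribution in `S_n` corresponding to `θ` coordinates. -/
def expDist {n : ℕ} (θ : E n) : Fin (n+1) → ℝ :=
  Fin.snoc (fun i => Real.exp (θ i) / (1 + ∑ j, Real.exp (θ j)))
    (1 / (1 + ∑ j, Real.exp (θ j)))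

/-- The `η` coordinates of a distribution `q ∈ S_n`. -/
def etaCoord {n : ℕ} (q : Fin (n+1) → ℝ) : E n := WithLp.toLp 2 (fun i => q i.castSucc)

/-- The `θ` coordinates of a distribution `q ∈ S_n`. -/
def thetaCoord {n : ℕ} (q : Fin (n+1) → ℝ) : E n :=
  WithLp.toLp 2 (fun i => Real.log (q i.castSucc / q (Fin.last n)))

/-- Kullback–Leibler divergence `D(q‖p)`. -/
def KL {n : ℕ} (q p : Fin (n+1) → ℝ) : ℝ := ∑ i, q i * Real.log (q i / p i)

/-- Log-partition function `ψ(θ) = log(1 + Σ e^{θ_i})`. -/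
def psi {n : ℕ} (θ : E n) : ℝ := Real.log (1 + ∑ i, Real.exp (θ i))

/-- Negative entropy `φ(η)`. -/
def phi {n : ℕ} (η : E n) : ℝ :=
  (∑ i, η i * Real.log (η i)) + (1 - ∑ i, η i) * Real.log (1 - ∑ i, η i)

/-- The loss `L_q` in `η` coordinates: `η ↦ D(q ‖ p(η))`. -/
def Leta {n : ℕ} (q : Fin (n+1) → ℝ) (η : E n) : ℝ := KL q (mixDist η)

/-- The loss `L_q` in `θ` coordinates: `θ ↦ D(q ‖ p(θ))`. -/
def Ltheta {n : ℕ} (q : Fin (n+1) → ℝ) (θ : E n) : ℝ := KL q (expDist θ)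

/-- The Hessian of `f : ℝⁿ → ℝ` at `x`, as the `n × n` matrix of second partial
derivatives. -/
def hess {n : ℕ} (f : E n → ℝ) (x : E n) : Matrix (Fin n) (Fin n) ℝ :=
  Matrix.of fun i j =>
    fderiv ℝ (fun y => fderiv ℝ f y (EuclideanSpace.single j 1)) x (EuclideanSpace.single i 1)

/-- The set of (real) eigenvalues of a matrix. -/
def lamSet {n : ℕ} (A : Matrix (Fin n) (Fin n) ℝ) : Set ℝ :=
  {μ | ∃ v : Fin n → ℝ, v ≠ 0 ∧ A.mulVec v = μ • v}

/-- Largest eigenvalue `λ_max`. -/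
def lamMax {n : ℕ} (A : Matrix (Fin n) (Fin n) ℝ) : ℝ := sSup (lamSet A)

/-- Smallest eigenvalue `λ_min`. -/
def lamMin {n : ℕ} (A : Matrix (Fin n) (Fin n) ℝ) : ℝ := sInf (lamSet A)

/-- Condition number `cond(A) = λ_max(A)/λ_min(A)`. -/
def condNum {n : ℕ} (A : Matrix (Fin n) (Fin n) ℝ) : ℝ := lamMax A / lamMin A

/-- Operator 2-norm of a matrix (induced by the Euclidean norm). -/
def opNorm {n : ℕ} (A : Matrix (Fin n) (Fin n) ℝ) : ℝ :=
  ‖Matrix.toEuclideanCLM (𝕜 := ℝ) A‖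

/-! The Hessian of `ψ` is `diag p - p pᵀ`, where `p = ∇ψ(θ)` has entries
`e^{θ_i} / (1 + Σ_j e^{θ_j})`, so that `p > 0` and `Σ p < 1`. By Cauchy–Schwarz,
`xᵀ(diag p - p pᵀ)x = Σ p_i x_i² - (Σ p_i x_i)² ≥ (1 - Σ p) Σ p_i x_i² > 0` for `x ≠ 0`, while
`I - ∇²ψ(θ) = diag (1 - p) + p pᵀ` is positive definite because every `p_i < 1`. -/

namespace Matrix

variable {ι : Type*} [Fintype ι] [DecidableEq ι]

theorem dotProduct_diagonal_sub_vecMulVec_self_mulVec (p x : ι → ℝ) :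
    x ⬝ᵥ ((diagonal p - vecMulVec p p) *ᵥ x)
      = ∑ i, p i * x i ^ 2 - (∑ i, p i * x i) ^ 2 := by
  have hdiag : x ⬝ᵥ (diagonal p *ᵥ x) = ∑ i, p i * x i ^ 2 :=
    Finset.sum_congr rfl fun i _ => by rw [mulVec_diagonal]; ring
  have hrank : x ⬝ᵥ (vecMulVec p p *ᵥ x) = (∑ i, p i * x i) ^ 2 := by
    simp only [vecMulVec_mulVec, dotProduct, Pi.smul_apply, op_smul_eq_mul]
    rw [sq, Finset.sum_mul]
    exact Finset.sum_congr rfl fun i _ => by ring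
  rw [sub_mulVec, dotProduct_sub, hdiag, hrank]

theorem isHermitian_diagonal_sub_vecMulVec_self (p : ι → ℝ) :
    (diagonal p - vecMulVec p p).IsHermitian :=
  (isHermitian_diagonal p).sub (posSemidef_vecMulVec_self_star p).isHermitian

theorem posDef_diagonal_sub_vecMulVec_self {p : ι → ℝ} (hp : ∀ i, 0 < p i)
    (hsum : ∑ i, p i < 1) : (diagonal p - vecMulVec p p).PosDef := by
  refine posDef_iff_dotProduct_mulVec.mpr
    ⟨isHermitian_diagonal_sub_vecMulVec_self p, fun x hx => ?_⟩
  rw [star_trivial, dotProduct_diagonal_sub_vecMulVec_self_mulVec]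
  obtain ⟨i, hi⟩ := Function.ne_iff.mp hx
  have hpos : 0 < ∑ i, p i * x i ^ 2 :=
    Finset.sum_pos' (fun j _ => mul_nonneg (hp j).le (sq_nonneg _))
      ⟨i, Finset.mem_univ i, mul_pos (hp i) (sq_pos_of_ne_zero hi)⟩
  have hcs : (∑ i, p i * x i) ^ 2 ≤ (∑ i, p i) * ∑ i, p i * x i ^ 2 :=
    Finset.sum_sq_le_sum_mul_sum_of_sq_le_mul _ (fun i _ => (hp i).le)
      (fun i _ => mul_nonneg (hp i).le (sq_nonneg _)) (fun i _ => le_of_eq (by ring))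
  nlinarith

theorem posDef_one_sub_diagonal_sub_vecMulVec_self {p : ι → ℝ} (hp : ∀ i, p i < 1) :
    (1 - (diagonal p - vecMulVec p p)).PosDef := by
  rw [sub_sub_eq_add_sub, add_sub_right_comm, ← diagonal_one, diagonal_sub]
  exact (PosDef.diagonal fun i => sub_pos.mpr (hp i)).add_posSemidef
    (by simpa using posSemidef_vecMulVec_self_star p)

end Matrix

section LogPartition

open Matrix Real

variable {n : ℕ}

def partitionFn (θ : E n) : ℝ := 1 + ∑ i, exp (θ i)

def gradPsi (θ : E n) (i : Fin n) : ℝ := exp (θ i) / partitionFn θ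

theorem partitionFn_pos (θ : E n) : 0 < partitionFn θ := by
  unfold partitionFn; positivity

theorem gradPsi_pos (θ : E n) (i : Fin n) : 0 < gradPsi θ i :=
  div_pos (exp_pos _) (partitionFn_pos θ)

theorem sum_gradPsi_lt_one (θ : E n) : ∑ i, gradPsi θ i < 1 := by
  simp only [gradPsi]
  rw [← Finset.sum_div, div_lt_one (partitionFn_pos θ), partitionFn]
  linarith

theorem gradPsi_lt_one (θ : E n) (i : Fin n) : gradPsi θ i < 1 :=
  (Finset.single_le_sum (fun j _ => (gradPsi_pos θ j).le) (Finset.mem_univ i)).trans_lt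
    (sum_gradPsi_lt_one θ)

theorem hasFDerivAt_exp_apply (θ : E n) (i : Fin n) :
    HasFDerivAt (fun y : E n => exp (y i)) (exp (θ i) • EuclideanSpace.proj (𝕜 := ℝ) i) θ :=
  ((hasDerivAt_exp (θ i)).comp_hasFDerivAt θ
    (EuclideanSpace.proj (𝕜 := ℝ) i).hasFDerivAt :)

theorem hasFDerivAt_partitionFn (θ : E n) :
    HasFDerivAt partitionFn (∑ i, exp (θ i) • EuclideanSpace.proj (𝕜 := ℝ) i) θ :=
  (HasFDerivAt.fun_sum fun i _ => hasFDerivAt_exp_apply θ i).const_add 1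

theorem fderiv_psi_single (θ : E n) (j : Fin n) :
    fderiv ℝ psi θ (EuclideanSpace.single j 1) = gradPsi θ j := by
  have h := (hasDerivAt_log (partitionFn_pos θ).ne').comp_hasFDerivAt θ
    (hasFDerivAt_partitionFn θ)
  rw [show psi = log ∘ partitionFn from rfl, h.fderiv]
  simp [gradPsi, div_eq_inv_mul]

theorem fderiv_gradPsi_single (θ : E n) (i j : Fin n) :
    fderiv ℝ (fun y => gradPsi y j) θ (EuclideanSpace.single i 1)
      = (if i = j then gradPsi θ i else 0) - gradPsi θ i * gradPsi θ j := by
  have hinv := (hasDerivAt_inv (partitionFn_pos θ).ne').comp_hasFDerivAt θ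
    (hasFDerivAt_partitionFn θ)
  have h : HasFDerivAt (fun y => exp (y j) * (partitionFn y)⁻¹) _ θ :=
    (hasFDerivAt_exp_apply θ j).mul hinv
  simp only [gradPsi, div_eq_mul_inv]
  rw [h.fderiv]
  simp only [neg_smul, smul_neg, _root_.add_apply, _root_.neg_apply, _root_.smul_apply,
    _root_.sum_apply, PiLp.proj_apply, PiLp.single_apply, smul_eq_mul, mul_ite, mul_one, mul_zero,
    Finset.sum_ite_eq', Finset.mem_univ, ↓reduceIte]
  rcases eq_or_ne i j with rfl | hij
  · simp only [if_true]; ring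
  · simp only [hij, hij.symm, if_false]; ring

theorem hess_psi (θ : E n) :
    hess psi θ = diagonal (gradPsi θ) - vecMulVec (gradPsi θ) (gradPsi θ) := by
  ext i j
  simp only [hess, of_apply, fderiv_psi_single, fderiv_gradPsi_single, Matrix.sub_apply,
    diagonal_apply, vecMulVec_apply]

end LogPartition

/-- For every `θ`, `0 ≺ ∇²ψ(θ) ≺ I`. -/
theorem stmt_1 {n : ℕ} (θ : E n) :
    (hess psi θ).PosDef ∧ ((1 : Matrix (Fin n) (Fin n) ℝ) - hess psi θ).PosDef := by
  rw [hess_psi]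
  exact ⟨Matrix.posDef_diagonal_sub_vecMulVec_self (gradPsi_pos θ) (sum_gradPsi_lt_one θ),
    Matrix.posDef_one_sub_diagonal_sub_vecMulVec_self (gradPsi_lt_one θ)⟩

end
end

section
/- Let Q be an n×n real symmetric positive definite matrix with condition number κ = λ_max(Q)/λ_min(Q), set α = 2/(λ_min(Q) + λ_max(Q)) and M = I − αQ. Then: (a) there is a unique symmetric matrix P solving the equation P = M·P·M + I; this P is positive definite, satisfies P ⪯ ((κ+1)²/(4κ))·I, and λ_max(P) = (κ+1)²/(4κ); and (b) for every symmetric positive semidefinite matrix P₀, the recursion P(k+1) = M·P(k)·M + I with P(0) = P₀ converges to P as k → ∞. -/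
open Filter

noncomputable section

/-! Diagonalising `Q`, the map `P ↦ M P M + 1` acts on the eigenspace of an eigenvalue `x` of `Q`
as `p ↦ μ² p + 1` with `μ = 1 - α x`, and `|μ| < 1` for `x ∈ [λ_min, λ_max]`. Hence
`P = (1 - M²)⁻¹` is a fixed point; its eigenvalues `1 / (1 - μ²) = (a + b)² / (4 x (a + b - x))`
(`a = λ_min`, `b = λ_max`) lie in `[1, (a + b)² / (4 a b)]`, the upper end attained at `x = a`,
and `(a + b)² / (4 a b) = (κ + 1)² / (4 κ)`. Since `M ^ k → 0`, the error `P_k - P = M^k (P₀ - P) M^k`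
of the iteration tends to `0`; applied to a constant sequence this gives uniqueness. -/

open Topology Matrix
open scoped MatrixOrder

section Stein

variable {R : Type*} [Ring R] {M C P : R}

theorem stein_iterate_sub_eq (hP : P = M * P * M + C) {X : ℕ → R}
    (hX : ∀ k, X (k + 1) = M * X k * M + C) (k : ℕ) :
    X k - P = M ^ k * (X 0 - P) * M ^ k := by
  induction k with
  | zero => simp
  | succ k ih =>
    calc X (k + 1) - P = M * (X k - P) * M := by
          conv_lhs => rw [hX k, hP]
          noncomm_ring
      _ = (M * M ^ k) * (X 0 - P) * (M ^ k * M) := by rw [ih]; noncomm_ring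
      _ = M ^ (k + 1) * (X 0 - P) * M ^ (k + 1) := by rw [← pow_succ', ← pow_succ]

variable [TopologicalSpace R] [IsTopologicalRing R]

theorem tendsto_stein_iterate (hM : Tendsto (M ^ ·) atTop (𝓝 0)) (hP : P = M * P * M + C)
    {X : ℕ → R} (hX : ∀ k, X (k + 1) = M * X k * M + C) : Tendsto X atTop (𝓝 P) := by
  have h : Tendsto (fun k => M ^ k * (X 0 - P) * M ^ k + P) atTop (𝓝 P) := by
    simpa using ((hM.mul_const (X 0 - P)).mul hM).add_const P
  refine h.congr fun k => ?_
  rw [← stein_iterate_sub_eq hP hX k, sub_add_cancel]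

theorem stein_solution_unique [T2Space R] (hM : Tendsto (M ^ ·) atTop (𝓝 0))
    (hP : P = M * P * M + C) {P' : R} (hP' : P' = M * P' * M + C) : P' = P :=
  tendsto_nhds_unique tendsto_const_nhds
    (tendsto_stein_iterate hM hP (X := fun _ => P') fun _ => hP')

end Stein

theorem Matrix.IsHermitian.isSymm {ι α : Type*} [Star α] [TrivialStar α] {A : Matrix ι ι α}
    (hA : A.IsHermitian) : A.IsSymm :=
  (conjTranspose_eq_transpose_of_trivial A).symm.trans hA

open scoped ComplexOrder in
theorem Matrix.posDef_of_one_le {ι 𝕜 : Type*} [DecidableEq ι] [RCLike 𝕜] {A : Matrix ι ι 𝕜}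
    (h : 1 ≤ A) : A.PosDef := by
  simpa using PosDef.one.add_posSemidef (le_iff.1 h)

section MatrixFacts

variable {ι : Type*} [Fintype ι] [DecidableEq ι]

theorem Matrix.continuousOn_spectrum (A : Matrix ι ι ℝ) (f : ℝ → ℝ) :
    ContinuousOn f (spectrum ℝ A) :=
  A.finite_spectrum.continuousOn f

theorem Matrix.IsHermitian.tendsto_pow_atTop_nhds_zero {A : Matrix ι ι ℝ} (hA : A.IsHermitian)
    (h : ∀ x ∈ spectrum ℝ A, |x| < 1) : Tendsto (A ^ ·) atTop (𝓝 0) := by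
  set U : Matrix ι ι ℝ := ↑hA.eigenvectorUnitary
  have hpow : ∀ k : ℕ, A ^ k = U * diagonal (fun i => hA.eigenvalues i ^ k) * star U := by
    intro k
    rw [← cfc_pow_id (R := ℝ) A k hA.isSelfAdjoint, hA.cfc_eq, IsHermitian.cfc,
      Unitary.conjStarAlgAut_apply]
    rfl
  have hdiag : Tendsto (fun k : ℕ => diagonal (fun i => hA.eigenvalues i ^ k)) atTop (𝓝 0) := by
    rw [← diagonal_zero]
    refine (continuous_id.matrix_diagonal.tendsto _).comp (tendsto_pi_nhds.2 fun i => ?_)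
    exact tendsto_pow_atTop_nhds_zero_of_abs_lt_one (h _ (hA.eigenvalues_mem_spectrum_real i))
  simpa [hpow] using (hdiag.const_mul U).mul_const (star U)

end MatrixFacts

section Eigenvalues

variable {n : ℕ} {A : Matrix (Fin n) (Fin n) ℝ}

theorem lamSet_eq_spectrum (A : Matrix (Fin n) (Fin n) ℝ) : lamSet A = spectrum ℝ A := by
  ext μ
  rw [← Matrix.spectrum_toLin', ← Module.End.hasEigenvalue_iff_mem_spectrum,
    Module.End.hasEigenvalue_iff, Submodule.ne_bot_iff]
  simp [lamSet, and_comm]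

theorem lamMin_le {x : ℝ} (hx : x ∈ spectrum ℝ A) : lamMin A ≤ x := by
  rw [lamMin, lamSet_eq_spectrum]
  exact csInf_le A.finite_spectrum.bddBelow hx

theorem le_lamMax {x : ℝ} (hx : x ∈ spectrum ℝ A) : x ≤ lamMax A := by
  rw [lamMax, lamSet_eq_spectrum]
  exact le_csSup A.finite_spectrum.bddAbove hx

theorem Matrix.IsHermitian.lamMin_mem_spectrum (hA : A.IsHermitian) (hn : 0 < n) :
    lamMin A ∈ spectrum ℝ A := by
  rw [lamMin, lamSet_eq_spectrum]
  refine Set.Nonempty.csInf_mem ?_ A.finite_spectrum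
  rw [hA.spectrum_real_eq_range_eigenvalues]
  exact Set.range_nonempty_iff_nonempty.2 ⟨⟨0, hn⟩⟩

theorem lamMax_eq_of_isGreatest {c : ℝ} (h : IsGreatest (spectrum ℝ A) c) : lamMax A = c := by
  rw [lamMax, lamSet_eq_spectrum, h.csSup_eq]

theorem Matrix.PosDef.lamMin_pos (hA : A.PosDef) (hn : 0 < n) : 0 < lamMin A := by
  obtain ⟨i, hi⟩ := hA.isHermitian.spectrum_real_eq_range_eigenvalues ▸
    hA.isHermitian.lamMin_mem_spectrum hn
  exact hi ▸ hA.eigenvalues_pos i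

end Eigenvalues

section Scalar

theorem inv_one_sub_sq_eq_mul_mul_add_one {μ : ℝ} (hμ : |μ| < 1) :
    (1 - μ ^ 2)⁻¹ = μ * (1 - μ ^ 2)⁻¹ * μ + 1 := by
  have : 1 - μ ^ 2 ≠ 0 := (sub_pos.2 ((sq_lt_one_iff_abs_lt_one μ).2 hμ)).ne'
  field_simp
  ring

theorem one_le_inv_one_sub_sq {μ : ℝ} (hμ : |μ| < 1) : 1 ≤ (1 - μ ^ 2)⁻¹ :=
  (one_le_inv₀ (sub_pos.2 ((sq_lt_one_iff_abs_lt_one μ).2 hμ))).2 (by nlinarith)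

variable {a b x : ℝ}

theorem one_sub_sq_one_sub_two_div_add_mul (hab : 0 < a + b) :
    1 - (1 - 2 / (a + b) * x) ^ 2 = 4 * x * (a + b - x) / (a + b) ^ 2 := by
  field_simp
  ring

theorem abs_one_sub_two_div_add_mul_lt_one (ha : 0 < a) (hax : a ≤ x) (hxb : x ≤ b) :
    |1 - 2 / (a + b) * x| < 1 := by
  have hab : 0 < a + b := by linarith
  have hx : 0 < x := by linarith
  have hbx : 0 < a + b - x := by linarith
  rw [← sq_lt_one_iff_abs_lt_one, ← sub_pos, one_sub_sq_one_sub_two_div_add_mul hab]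
  positivity

theorem four_mul_mul_div_le_one_sub_sq (ha : 0 < a) (hax : a ≤ x) (hxb : x ≤ b) :
    4 * a * b / (a + b) ^ 2 ≤ 1 - (1 - 2 / (a + b) * x) ^ 2 := by
  rw [one_sub_sq_one_sub_two_div_add_mul (by linarith)]
  refine div_le_div_of_nonneg_right ?_ (sq_nonneg _)
  nlinarith [mul_nonneg (sub_nonneg.2 hax) (sub_nonneg.2 hxb)]

end Scalar

section SteinSolution

variable {ι : Type*} [Fintype ι] [DecidableEq ι] {Q : Matrix ι ι ℝ}

/-- `(1 - M²)⁻¹` for `M = 1 - α • Q`: the fixed point of `P ↦ M P M + 1` when the spectrum of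
`M` lies in `(-1, 1)`. -/
def steinSolution (α : ℝ) (Q : Matrix ι ι ℝ) : Matrix ι ι ℝ :=
  cfc (fun x => (1 - (1 - α * x) ^ 2)⁻¹) Q

theorem one_sub_smul_eq_cfc (hQ : IsSelfAdjoint Q) (α : ℝ) :
    1 - α • Q = cfc (fun x => 1 - α * x) Q := by
  rw [cfc_sub _ _ Q (Q.continuousOn_spectrum _) (Q.continuousOn_spectrum _), cfc_const_one ℝ Q,
    cfc_const_mul_id α Q]

variable {α : ℝ}

theorem isSelfAdjoint_steinSolution : IsSelfAdjoint (steinSolution α Q) :=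
  cfc_predicate _ Q

theorem tendsto_pow_one_sub_smul (hQ : IsSelfAdjoint Q)
    (hα : ∀ x ∈ spectrum ℝ Q, |1 - α * x| < 1) : Tendsto ((1 - α • Q) ^ ·) atTop (𝓝 0) := by
  rw [one_sub_smul_eq_cfc hQ]
  refine (cfc_predicate (R := ℝ) _ Q).isHermitian.tendsto_pow_atTop_nhds_zero ?_
  rw [cfc_map_spectrum _ Q]
  rintro _ ⟨x, hx, rfl⟩
  exact hα x hx

theorem steinSolution_eq (hQ : IsSelfAdjoint Q) (hα : ∀ x ∈ spectrum ℝ Q, |1 - α * x| < 1) :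
    steinSolution α Q = (1 - α • Q) * steinSolution α Q * (1 - α • Q) + 1 := by
  have hcont := Q.continuousOn_spectrum
  rw [steinSolution, one_sub_smul_eq_cfc hQ, ← cfc_mul _ _ Q (hcont _) (hcont _),
    ← cfc_mul _ _ Q (hcont _) (hcont _), ← map_one (algebraMap ℝ (Matrix ι ι ℝ)),
    ← cfc_add_const 1 _ Q (hcont _)]
  exact cfc_congr fun x hx => inv_one_sub_sq_eq_mul_mul_add_one (hα x hx)

theorem one_le_steinSolution (hQ : IsSelfAdjoint Q) (hα : ∀ x ∈ spectrum ℝ Q, |1 - α * x| < 1) :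
    1 ≤ steinSolution α Q :=
  one_le_cfc _ Q (fun x hx => one_le_inv_one_sub_sq (hα x hx)) (Q.continuousOn_spectrum _)

variable {a b : ℝ}

theorem inv_one_sub_sq_le_of_mem_spectrum (ha : 0 < a) (hspec : spectrum ℝ Q ⊆ Set.Icc a b)
    {x : ℝ} (hx : x ∈ spectrum ℝ Q) :
    (1 - (1 - 2 / (a + b) * x) ^ 2)⁻¹ ≤ (4 * a * b / (a + b) ^ 2)⁻¹ := by
  have hb : 0 < b := ha.trans_le ((hspec hx).1.trans (hspec hx).2)
  exact inv_anti₀ (by positivity) (four_mul_mul_div_le_one_sub_sq ha (hspec hx).1 (hspec hx).2)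

theorem steinSolution_le (hQ : IsSelfAdjoint Q) (ha : 0 < a)
    (hspec : spectrum ℝ Q ⊆ Set.Icc a b) :
    steinSolution (2 / (a + b)) Q ≤ algebraMap ℝ (Matrix ι ι ℝ) (4 * a * b / (a + b) ^ 2)⁻¹ :=
  cfc_le_algebraMap _ _ Q (fun _ => inv_one_sub_sq_le_of_mem_spectrum ha hspec)
    (Q.continuousOn_spectrum _)

theorem isGreatest_spectrum_steinSolution (hQ : IsSelfAdjoint Q) (ha : 0 < a)
    (hspec : spectrum ℝ Q ⊆ Set.Icc a b) (haQ : a ∈ spectrum ℝ Q) :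
    IsGreatest (spectrum ℝ (steinSolution (2 / (a + b)) Q)) (4 * a * b / (a + b) ^ 2)⁻¹ := by
  rw [steinSolution, cfc_map_spectrum _ Q hQ (Q.continuousOn_spectrum _)]
  refine ⟨⟨a, haQ, ?_⟩, Set.forall_mem_image.2 fun _ => inv_one_sub_sq_le_of_mem_spectrum ha hspec⟩
  beta_reduce
  rw [one_sub_sq_one_sub_two_div_add_mul (by linarith [(hspec haQ).2]), add_sub_cancel_left]

end SteinSolution

/-- The discrete Lyapunov equation `P = M·P·M + I`: unique symmetric solution,
its bounds, and convergence of the associated recursion. -/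
theorem stmt_17 {n : ℕ} (hn : 0 < n) (Q : Matrix (Fin n) (Fin n) ℝ)
    (hQ : Q.PosDef) :
    (let κ := condNum Q
     let α := 2 / (lamMin Q + lamMax Q)
     let M := (1 : Matrix (Fin n) (Fin n) ℝ) - α • Q
     ∃ P : Matrix (Fin n) (Fin n) ℝ,
       P.IsSymm ∧ P = M * P * M + 1 ∧
       (∀ P' : Matrix (Fin n) (Fin n) ℝ, P'.IsSymm → P' = M * P' * M + 1 → P' = P) ∧
       P.PosDef ∧
       (((κ + 1) ^ 2 / (4 * κ)) • (1 : Matrix (Fin n) (Fin n) ℝ) - P).PosSemidef ∧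
       lamMax P = (κ + 1) ^ 2 / (4 * κ) ∧
       ∀ P₀ : Matrix (Fin n) (Fin n) ℝ, P₀.PosSemidef →
         ∀ Pseq : ℕ → Matrix (Fin n) (Fin n) ℝ, Pseq 0 = P₀ →
           (∀ k, Pseq (k + 1) = M * Pseq k * M + 1) →
           Filter.Tendsto Pseq Filter.atTop (nhds P)) := by
  intro κ α M
  set a := lamMin Q
  set b := lamMax Q
  have hQsa : IsSelfAdjoint Q := hQ.isHermitian.isSelfAdjoint
  have ha : 0 < a := hQ.lamMin_pos hn
  have haQ : a ∈ spectrum ℝ Q := hQ.isHermitian.lamMin_mem_spectrum hn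
  have hspec : spectrum ℝ Q ⊆ Set.Icc a b := fun x hx => ⟨lamMin_le hx, le_lamMax hx⟩
  have hα : ∀ x ∈ spectrum ℝ Q, |1 - α * x| < 1 := fun x hx =>
    abs_one_sub_two_div_add_mul_lt_one ha (hspec hx).1 (hspec hx).2
  have hMpow : Tendsto (M ^ ·) atTop (𝓝 0) := tendsto_pow_one_sub_smul hQsa hα
  have hP := steinSolution_eq hQsa hα
  have hb : 0 < b := ha.trans_le (hspec haQ).2
  have hκ : (κ + 1) ^ 2 / (4 * κ) = (4 * a * b / (a + b) ^ 2)⁻¹ := by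
    change (b / a + 1) ^ 2 / (4 * (b / a)) = _
    field_simp
    ring
  rw [hκ, ← Algebra.algebraMap_eq_smul_one]
  exact ⟨steinSolution α Q, isSelfAdjoint_steinSolution.isHermitian.isSymm, hP,
    fun P' _ hP' => stein_solution_unique hMpow hP hP',
    posDef_of_one_le (one_le_steinSolution hQsa hα), le_iff.1 (steinSolution_le hQsa ha hspec),
    lamMax_eq_of_isGreatest (isGreatest_spectrum_steinSolution hQsa ha hspec haQ),
    fun _ _ _ _ hX => tendsto_stein_iterate hMpow hP hX⟩

end
end

section
/- Let q ∈ S_n with η coordinates η_q. The loss L_q in η coordinates is differentiable on Δ_n, and for every η ∈ Δ_n its gradient is given by ∇L_q(η) = −∇²φ(η)·(η_q − η); equivalently, since ∇²φ(η) is invertible, the natural gradient (∇²φ(η))^{−1}·∇L_q(η) equals η − η_q. -/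
open Filter

noncomputable section

/-! In mixture coordinates the chart `η ↦ p(η)` is affine, `p(η) = p(0) + J η`, so
`φ(η) = ∑ₘ pₘ log pₘ` and `L_q(η) = ∑ₘ qₘ log qₘ - ∑ₘ qₘ log pₘ` are sums of one-variable functions
of affine maps. Differentiating gives `∇L_q(η) = -Jᵀ (q / p)` and `∇²φ(η) = Jᵀ diag(1 / p) J`, the
Fisher information, which is positive definite because `J` is injective. Finally
`J (η_q - η) = q - p` and `Jᵀ 1 = 0` (as `p(η)` always sums to `1`), so
`∇²φ(η) (η_q - η) = Jᵀ (q / p - 1) = Jᵀ (q / p) = -∇L_q(η)`. -/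

open Matrix Topology

lemma Matrix.toEuclideanCLM_nonsing_inv_apply {ι 𝕜 : Type*} [Fintype ι] [DecidableEq ι]
    [RCLike 𝕜] {A : Matrix ι ι 𝕜} (hA : IsUnit A) (v : EuclideanSpace 𝕜 ι) :
    toEuclideanCLM (𝕜 := 𝕜) A⁻¹ (toEuclideanCLM (𝕜 := 𝕜) A v) = v := by
  apply WithLp.ofLp_injective 2
  simp [mulVec_mulVec, nonsing_inv_mul _ ((isUnit_iff_isUnit_det _).1 hA)]

section MixtureCoordinates

variable {n : ℕ}

def mixJac (n : ℕ) : Matrix (Fin (n+1)) (Fin n) ℝ :=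
  Matrix.of fun m i => Fin.lastCases (-1) (fun k => (1 : Matrix (Fin n) (Fin n) ℝ) k i) m

@[simp]
lemma mixJac_castSucc (k i : Fin n) :
    mixJac n k.castSucc i = (1 : Matrix (Fin n) (Fin n) ℝ) k i := by
  simp [mixJac]

@[simp]
lemma mixJac_last (i : Fin n) : mixJac n (Fin.last n) i = -1 := by
  simp [mixJac]

lemma mixJac_mulVec_injective : Function.Injective (mixJac n).mulVec := by
  intro x y h
  ext k
  simpa [mulVec, dotProduct, Matrix.one_apply] using congrFun h k.castSucc

lemma one_vecMul_mixJac : (1 : Fin (n+1) → ℝ) ᵥ* mixJac n = 0 := by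
  ext i
  simp [vecMul, dotProduct, Fin.sum_univ_castSucc, Matrix.one_apply]

lemma mixDist_eq_add_mulVec (y : E n) : mixDist y = mixDist 0 + mixJac n *ᵥ y.ofLp := by
  ext m
  induction m using Fin.lastCases with
  | last => simp [mixDist, mulVec, dotProduct]; ring
  | cast k => simp [mixDist, mulVec, dotProduct, Matrix.one_apply]

lemma mixJac_mulVec_sub (x y : E n) : mixJac n *ᵥ (x - y).ofLp = mixDist x - mixDist y := by
  rw [mixDist_eq_add_mulVec x, mixDist_eq_add_mulVec y, WithLp.ofLp_sub, mulVec_sub]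
  abel

lemma mixDist_etaCoord {q : Fin (n+1) → ℝ} (hq : ∑ i, q i = 1) : mixDist (etaCoord q) = q := by
  rw [Fin.sum_univ_castSucc] at hq
  ext m
  induction m using Fin.lastCases with
  | last => simp [mixDist, etaCoord]; linarith
  | cast k => simp [mixDist, etaCoord]

lemma mixDist_pos_of_mem_Δset {η : E n} (hη : η ∈ Δset n) (m : Fin (n+1)) :
    0 < mixDist η m := by
  induction m using Fin.lastCases with
  | last => simpa [mixDist] using hη.2
  | cast k => simpa [mixDist] using hη.1 k

def mixJacCLM (n : ℕ) : E n →L[ℝ] (Fin (n+1) → ℝ) :=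
  (Matrix.toLin' (mixJac n)).toContinuousLinearMap ∘L
    (EuclideanSpace.equiv (Fin n) ℝ).toContinuousLinearMap

@[simp]
lemma mixJacCLM_apply (v : E n) : mixJacCLM n v = mixJac n *ᵥ v.ofLp := rfl

lemma hasFDerivAt_mixDist (y : E n) : HasFDerivAt mixDist (mixJacCLM n) y := by
  rw [show mixDist = fun y : E n => mixDist 0 + mixJacCLM n y from funext mixDist_eq_add_mulVec]
  exact (mixJacCLM n).hasFDerivAt.const_add _

lemma hasFDerivAt_mixDist_apply (m : Fin (n+1)) (y : E n) :
    HasFDerivAt (fun y => mixDist y m) (ContinuousLinearMap.proj m ∘L mixJacCLM n) y :=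
  hasFDerivAt_pi'.1 (hasFDerivAt_mixDist y) m

lemma eventually_mixDist_ne_zero {η : E n} (hη : ∀ m, mixDist η m ≠ 0) :
    ∀ᶠ y in 𝓝 η, ∀ m, mixDist y m ≠ 0 :=
  eventually_all.2 fun m => (hasFDerivAt_mixDist_apply m η).continuousAt.eventually_ne (hη m)

lemma phi_eq_sum_mixDist (y : E n) : phi y = ∑ m, mixDist y m * Real.log (mixDist y m) := by
  simp [phi, mixDist, Fin.sum_univ_castSucc]

lemma KL_eq_sub {q p : Fin (n+1) → ℝ} (hp : ∀ i, p i ≠ 0) :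
    KL q p = ∑ i, q i * Real.log (q i) - ∑ i, q i * Real.log (p i) := by
  rw [KL, ← Finset.sum_sub_distrib]
  refine Finset.sum_congr rfl fun i _ => ?_
  rcases eq_or_ne (q i) 0 with h | h
  · simp [h]
  · rw [Real.log_div h (hp i), mul_sub]

lemma hasFDerivAt_phi {y : E n} (hy : ∀ m, mixDist y m ≠ 0) :
    HasFDerivAt phi
      (∑ m, (Real.log (mixDist y m) + 1) • (ContinuousLinearMap.proj m ∘L mixJacCLM n)) y := by
  rw [show phi = fun y : E n => ∑ m, mixDist y m * Real.log (mixDist y m) from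
    funext phi_eq_sum_mixDist]
  exact HasFDerivAt.fun_sum fun m _ =>
    (Real.hasDerivAt_mul_log (hy m)).comp_hasFDerivAt (f := fun y => mixDist y m) y
      (hasFDerivAt_mixDist_apply m y)

lemma hess_phi_eq {η : E n} (hη : ∀ m, mixDist η m ≠ 0) :
    hess phi η = (mixJac n)ᵀ * diagonal (fun m => (mixDist η m)⁻¹) * mixJac n := by
  ext i j
  have hpartial : (fun y => fderiv ℝ phi y (EuclideanSpace.single j 1)) =ᶠ[𝓝 η]
      fun y => ∑ m, (Real.log (mixDist y m) + 1) * mixJac n m j := by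
    filter_upwards [eventually_mixDist_ne_zero hη] with y hy
    simp [(hasFDerivAt_phi hy).fderiv]
  have hderiv : HasFDerivAt (fun y => ∑ m, (Real.log (mixDist y m) + 1) * mixJac n m j)
      (∑ m, mixJac n m j • (mixDist η m)⁻¹ • (ContinuousLinearMap.proj m ∘L mixJacCLM n)) η :=
    HasFDerivAt.fun_sum fun m _ =>
      (((Real.hasDerivAt_log (hη m)).comp_hasFDerivAt (f := fun y => mixDist y m) η
        (hasFDerivAt_mixDist_apply m η)).add_const 1).mul_const (mixJac n m j)
  rw [hess, of_apply, hpartial.fderiv_eq, hderiv.fderiv]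
  simp [mul_apply, diagonal, mul_comm, mul_left_comm]

lemma posDef_hess_phi {η : E n} (hη : ∀ m, 0 < mixDist η m) : (hess phi η).PosDef := by
  rw [hess_phi_eq fun m => (hη m).ne', ← conjTranspose_eq_transpose_of_trivial]
  exact (PosDef.diagonal fun m => inv_pos.2 (hη m)).conjTranspose_mul_mul_same
    mixJac_mulVec_injective

lemma hess_phi_mulVec_etaCoord_sub {q : Fin (n+1) → ℝ} (hq : ∑ i, q i = 1) {η : E n}
    (hη : ∀ m, mixDist η m ≠ 0) :
    hess phi η *ᵥ (etaCoord q - η).ofLp = (fun m => q m / mixDist η m) ᵥ* mixJac n := by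
  have hratio : diagonal (fun m => (mixDist η m)⁻¹) *ᵥ (q - mixDist η)
      = (fun m => q m / mixDist η m) - 1 := by
    ext m
    simp [mulVec_diagonal]
    field_simp [hη m]
  rw [hess_phi_eq hη, ← mulVec_mulVec, ← mulVec_mulVec, mixJac_mulVec_sub, mixDist_etaCoord hq,
    hratio, mulVec_transpose, sub_vecMul, one_vecMul_mixJac, sub_zero]

lemma hasGradientAt_Leta (q : Fin (n+1) → ℝ) {η : E n} (hη : ∀ m, mixDist η m ≠ 0) :
    HasGradientAt (Leta q) (-WithLp.toLp 2 ((fun m => q m / mixDist η m) ᵥ* mixJac n)) η := by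
  have hderiv : HasFDerivAt
      (fun y => ∑ i, q i * Real.log (q i) - ∑ m, q m * Real.log (mixDist y m))
      (0 - ∑ m, q m • (mixDist η m)⁻¹ • (ContinuousLinearMap.proj m ∘L mixJacCLM n)) η :=
    (hasFDerivAt_const _ η).sub <| HasFDerivAt.fun_sum fun m _ =>
      ((Real.hasDerivAt_log (hη m)).comp_hasFDerivAt (f := fun y => mixDist y m) η
        (hasFDerivAt_mixDist_apply m η)).const_mul (q m)
  have hLeta : Leta q =ᶠ[𝓝 η]
      fun y => ∑ i, q i * Real.log (q i) - ∑ m, q m * Real.log (mixDist y m) := by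
    filter_upwards [eventually_mixDist_ne_zero hη] with y hy
    exact KL_eq_sub hy
  rw [hasGradientAt_iff_hasFDerivAt]
  refine (hderiv.congr_of_eventuallyEq hLeta).congr_fderiv ?_
  ext v
  rw [InnerProductSpace.toDual_apply_apply, inner_neg_left,
    EuclideanSpace.inner_eq_star_dotProduct, star_trivial, dotProduct_comm, ← dotProduct_mulVec]
  simp [dotProduct, div_eq_mul_inv, mul_assoc]

end MixtureCoordinates

/-- Gradient of the loss in `η` coordinates and the natural gradient formula. -/
theorem stmt_19 {n : ℕ} (q : Fin (n+1) → ℝ) (hq : q ∈ simplex n)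
    (η : E n) (hη : η ∈ Δset n) :
    HasGradientAt (Leta q)
      (-(Matrix.toEuclideanCLM (𝕜 := ℝ) (hess phi η) (etaCoord q - η))) η ∧
    IsUnit (hess phi η) ∧
    Matrix.toEuclideanCLM (𝕜 := ℝ) (hess phi η)⁻¹ (gradient (Leta q) η) =
      η - etaCoord q := by
  have hpos := mixDist_pos_of_mem_Δset hη
  have hne : ∀ m, mixDist η m ≠ 0 := fun m => (hpos m).ne'
  have hunit : IsUnit (hess phi η) := (posDef_hess_phi hpos).isUnit
  have hgrad : HasGradientAt (Leta q)
      (-(toEuclideanCLM (𝕜 := ℝ) (hess phi η) (etaCoord q - η))) η := by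
    rw [← WithLp.toLp_ofLp 2 (etaCoord q - η), toEuclideanCLM_toLp,
      hess_phi_mulVec_etaCoord_sub hq.2 hne]
    exact hasGradientAt_Leta q hne
  refine ⟨hgrad, hunit, ?_⟩
  rw [hgrad.gradient, map_neg, toEuclideanCLM_nonsing_inv_apply hunit, neg_sub]
end
end
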